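/- arXiv:2012.13306 — 2 statements merged into one kernel-verified Lean document; each statement's English description precedes it below -/
import Mathlib

section
/- Let (X,d) be a finite metric space, h a chaining functional of log-concave type, μ and ν probability measures on X, and r > 0. Then Σ_{x∈X} ν(x)·h(ν(B(x,2r))) ≤ Σ_{x∈X} ν(x)·h(μ(B(x,r))) + 1/e, with the conventions 0·∞ = 0 and h(0) := lim_{p→0⁺} h(p) ∈ (0,∞]. -/
open MeasureTheory

noncomputable section

/-- `f` is log-concave on `[0,∞)`. -/
def IsLogConcaveOn (f : ℝ → ℝ) : Prop :=
  ∀ x ∈ Set.Ici (0:ℝ), ∀ y ∈ Set.Ici (0:ℝ), ∀ t ∈ Set.Icc (0:ℝ) 1,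
    f x ^ t * f y ^ (1 - t) ≤ f (t * x + (1 - t) * y)

/-- `f` is a continuous, non-increasing, log-concave probability density on `[0,∞)`
normalized so that `f 0 = 1`. -/
structure IsChainingDensity (f : ℝ → ℝ) : Prop where
  nonneg : ∀ t : ℝ, 0 ≤ t → 0 ≤ f t
  continuousOn : ContinuousOn f (Set.Ici 0)
  antitoneOn : AntitoneOn f (Set.Ici 0)
  logConcave : IsLogConcaveOn f
  total : (∫ t in Set.Ioi (0:ℝ), f t) = 1
  normalized : f 0 = 1

/-- The complementary cumulative distribution function `F(s) = ∫_s^∞ f(t) dt`. -/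
def ccdf (f : ℝ → ℝ) (s : ℝ) : ℝ := ∫ t in Set.Ioi s, f t

/-- The chaining functional `h(p) = F⁻¹(p)`, defined on `(0,1]` as the least
`s ≥ 0` with `F(s) ≤ p`. -/
def chainFn (f : ℝ → ℝ) (p : ℝ) : ℝ := sInf {s : ℝ | 0 ≤ s ∧ ccdf f s ≤ p}

open scoped ENNReal

/-- The extended (`[0,∞]`-valued) chaining functional: `h(p)` is the least `s ≥ 0`
with `F(s) ≤ p`, and `+∞` when no such `s` exists (in particular
`h(0) = lim_{p→0⁺} h(p) ∈ (0,∞]`). -/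
def chainFnE (f : ℝ → ℝ) (p : ℝ) : ℝ≥0∞ :=
  sInf {t : ℝ≥0∞ | ∃ s : ℝ, 0 ≤ s ∧ ccdf f s ≤ p ∧ t = ENNReal.ofReal s}

/-- A probability measure on a finite set, given by its point masses. -/
def IsProbOn {X : Type*} [Fintype X] (μ : X → ℝ) : Prop :=
  (∀ x, 0 ≤ μ x) ∧ (∑ x, μ x) = 1

/-- The mass `μ(B(x,r))` of the closed ball of radius `r` around `x`. -/
def ballMass {X : Type*} [MetricSpace X] [Fintype X] (μ : X → ℝ) (x : X) (r : ℝ) : ℝ :=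
  ∑ y ∈ Finset.univ.filter (fun y => dist x y ≤ r), μ y

/-- `∫₀^∞ h(μ(B(x,r))) dr`, valued in `[0,∞]`. -/
def Hint {X : Type*} [MetricSpace X] [Fintype X] (f : ℝ → ℝ) (μ : X → ℝ) (x : X) : ℝ≥0∞ :=
  ∫⁻ r in Set.Ioi (0:ℝ), chainFnE f (ballMass μ x r)

/-- The diameter of the finite metric space `X`. -/
def fdiam (X : Type*) [MetricSpace X] : ℝ := Metric.diam (Set.univ : Set X)

/-!
Log-concavity and `f 0 = 1` make `f` submultiplicative, `f (x + y) ≤ f x * f y`; integrating in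
`y` gives `F ≤ f` for the tail `F = ccdf f`. Since `F' = -f`, the function `s ↦ eˢ F(s)` is
non-increasing, hence `t F(s + t) ≤ t e⁻ᵗ F(s) ≤ F(s) / e`. With `s = h(B)`, `s + t = h(A)`,
`F(h(B)) ≤ B` and `A ≤ F(h(A))`, this is `A (h(A) - h(B)) ≤ B / e`.

The theorem then follows by a greedy covering: pick `x` maximising
`h(ν(B(x,2r))) - h(μ(B(x,r)))`, bound the terms of all points of `B(x,2r)` by this maximum and the
inequality above with `A = ν(B(x,2r))`, `B = μ(B(x,r))`, discard these points and recurse. The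
balls `B(x,r)` of the chosen centres are pairwise disjoint, so the errors add up to at most `μ(X)/e`.
-/
open Set Real

namespace IsLogConcaveOn

theorem map_add_le_mul {f : ℝ → ℝ} (hlc : IsLogConcaveOn f) (h0 : f 0 = 1) {x y : ℝ}
    (hx : 0 ≤ x) (hy : 0 ≤ y) (hxy : 0 ≤ f (x + y)) : f (x + y) ≤ f x * f y := by
  rcases (add_nonneg hx hy).eq_or_lt with h | h
  · obtain ⟨rfl, rfl⟩ : x = 0 ∧ y = 0 := ⟨by linarith, by linarith⟩
    simp [h0]
  set t := x / (x + y)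
  have ht : t ∈ Icc (0 : ℝ) 1 := ⟨div_nonneg hx h.le, div_le_one_of_le₀ (by linarith) h.le⟩
  have htx : t * (x + y) = x := div_mul_cancel₀ _ h.ne'
  have hx' := hlc (x + y) h.le 0 self_mem_Ici t ht
  have hy' := hlc 0 self_mem_Ici (x + y) h.le t ht
  rw [show t * (x + y) + (1 - t) * 0 = x by linear_combination htx, h0, one_rpow, mul_one] at hx'
  rw [show t * 0 + (1 - t) * (x + y) = y by linear_combination -htx, h0, one_rpow, one_mul] at hy'
  calc f (x + y) = f (x + y) ^ t * f (x + y) ^ (1 - t) := by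
        rw [← rpow_add' hxy (by norm_num), add_sub_cancel, rpow_one]
    _ ≤ f x * f y := mul_le_mul hx' hy' (rpow_nonneg hxy _) ((rpow_nonneg hxy _).trans hx')

end IsLogConcaveOn

theorem chainFnE_antitone (f : ℝ → ℝ) : Antitone (chainFnE f) := fun _ _ hpq =>
  sInf_le_sInf fun _ ⟨s, hs, hFs, he⟩ => ⟨s, hs, hFs.trans hpq, he⟩

namespace IsChainingDensity

variable {f : ℝ → ℝ} (hf : IsChainingDensity f)
include hf

theorem integrableOn : IntegrableOn f (Ioi 0) := by
  by_contra h
  exact zero_ne_one (integral_undef h ▸ hf.total)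

theorem ccdf_zero : ccdf f 0 = 1 := hf.total

theorem ccdf_nonneg {s : ℝ} (hs : 0 ≤ s) : 0 ≤ ccdf f s :=
  setIntegral_nonneg measurableSet_Ioi fun t ht => hf.nonneg t (hs.trans (le_of_lt ht))

theorem ccdf_le_apply {s : ℝ} (hs : 0 ≤ s) : ccdf f s ≤ f s := by
  have hshift := measurePreserving_sub_right volume s
  have hemb := measurableEmbedding_subRight s
  have hpre : (fun t => t - s) ⁻¹' Ioi 0 = Ioi s := by simp
  have hint : IntegrableOn (fun t => f (t - s)) (Ioi s) :=
    hpre ▸ (hshift.integrableOn_comp_preimage hemb).2 hf.integrableOn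
  calc ccdf f s ≤ ∫ t in Ioi s, f s * f (t - s) := by
        refine setIntegral_mono_on (hf.integrableOn.mono_set (Ioi_subset_Ioi hs))
          (hint.const_mul _) measurableSet_Ioi fun t ht => ?_
        have hts : 0 ≤ t - s := sub_nonneg.2 (le_of_lt ht)
        simpa using hf.logConcave.map_add_le_mul hf.normalized hs hts
          (hf.nonneg _ (add_nonneg hs hts))
    _ = f s := by
        rw [integral_const_mul, ← hpre, hshift.setIntegral_preimage_emb hemb, hf.total, mul_one]

theorem continuousOn_ccdf : ContinuousOn (ccdf f) (Ici 0) :=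
  hf.integrableOn.continuousOn_Ici_primitive_Ioi

theorem hasDerivAt_ccdf {s : ℝ} (hs : 0 < s) : HasDerivAt (ccdf f) (-f s) s := by
  have hprim := intervalIntegral.integral_hasDerivAt_right
    ((hf.continuousOn.mono Icc_subset_Ici_self).intervalIntegrable_of_Icc hs.le)
    ((hf.continuousOn.mono Ioi_subset_Ici_self).stronglyMeasurableAtFilter isOpen_Ioi s hs)
    (hf.continuousOn.continuousAt (Ici_mem_nhds hs))
  refine (hprim.const_sub 1).congr_of_eventuallyEq ?_
  filter_upwards [Ioi_mem_nhds hs] with u hu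
  rw [← hf.ccdf_zero, ← intervalIntegral.integral_Ioi_sub_Ioi hf.integrableOn (le_of_lt hu)]
  simp [ccdf]

theorem ccdf_add_le {s t : ℝ} (hs : 0 ≤ s) (ht : 0 ≤ t) :
    ccdf f (s + t) ≤ exp (-t) * ccdf f s := by
  have hanti : AntitoneOn (fun u => exp u * ccdf f u) (Ici 0) := by
    refine antitoneOn_of_hasDerivWithinAt_nonpos (convex_Ici 0)
      (continuous_exp.continuousOn.mul hf.continuousOn_ccdf) (fun u hu => ?_) (fun u hu => ?_)
      (f' := fun u => exp u * ccdf f u + exp u * -f u)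
    · rw [interior_Ici] at hu
      exact ((hasDerivAt_exp u).mul (hf.hasDerivAt_ccdf hu)).hasDerivWithinAt
    · rw [interior_Ici] at hu
      have := hf.ccdf_le_apply (le_of_lt hu)
      nlinarith [exp_pos u]
  have h := hanti hs (add_nonneg hs ht) (le_add_of_nonneg_right ht)
  calc ccdf f (s + t) = exp (-(s + t)) * (exp (s + t) * ccdf f (s + t)) := by
        rw [← mul_assoc, ← exp_add, neg_add_cancel, exp_zero, one_mul]
    _ ≤ exp (-(s + t)) * (exp s * ccdf f s) := by gcongr
    _ = exp (-t) * ccdf f s := by rw [← mul_assoc, ← exp_add]; ring_nf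

theorem mul_ccdf_add_le {s t : ℝ} (hs : 0 ≤ s) (ht : 0 ≤ t) :
    t * ccdf f (s + t) ≤ exp (-1) * ccdf f s :=
  calc t * ccdf f (s + t) ≤ t * (exp (-t) * ccdf f s) := by
        gcongr; exact hf.ccdf_add_le hs ht
    _ = t * exp (-t) * ccdf f s := by ring
    _ ≤ exp (-1) * ccdf f s := by
        gcongr
        · exact hf.ccdf_nonneg hs
        · exact mul_exp_neg_le_exp_neg_one t

theorem exists_ccdf_le {p : ℝ} (hp : 0 < p) : ∃ s, 0 ≤ s ∧ ccdf f s ≤ p := by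
  refine ⟨p⁻¹, inv_nonneg.2 hp.le, ?_⟩
  have h := hf.mul_ccdf_add_le le_rfl (inv_nonneg.2 hp.le)
  rw [zero_add, hf.ccdf_zero, mul_one, inv_mul_le_iff₀ hp] at h
  have : exp (-1) < 1 := exp_lt_one_iff.2 (by norm_num)
  nlinarith

theorem isLeast_chainFn {p : ℝ} (hp : 0 < p) :
    IsLeast {s | 0 ≤ s ∧ ccdf f s ≤ p} (chainFn f p) :=
  IsClosed.isLeast_csInf (hf.continuousOn_ccdf.preimage_isClosed_of_isClosed isClosed_Ici
    isClosed_Iic) (hf.exists_ccdf_le hp) ⟨0, fun _ hs => hs.1⟩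

theorem le_ccdf_chainFn {p : ℝ} (hp : 0 < p) (hpos : 0 < chainFn f p) :
    p ≤ ccdf f (chainFn f p) := by
  have hcl : chainFn f p ∈ closure (Ico 0 (chainFn f p)) := by
    rw [closure_Ico hpos.ne]
    exact right_mem_Icc.2 hpos.le
  refine ContinuousWithinAt.closure_le hcl continuousWithinAt_const
    ((hf.continuousOn_ccdf _ hpos.le).mono Ico_subset_Ici_self) fun s hs => ?_
  exact not_lt.1 fun h => hs.2.not_ge ((hf.isLeast_chainFn hp).2 ⟨hs.1, h.le⟩)

theorem chainFnE_eq_ofReal {p : ℝ} (hp : 0 < p) :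
    chainFnE f p = ENNReal.ofReal (chainFn f p) := by
  have h := hf.isLeast_chainFn hp
  refine le_antisymm (sInf_le ⟨_, h.1.1, h.1.2, rfl⟩) (le_sInf ?_)
  rintro _ ⟨s, hs, hFs, rfl⟩
  exact ENNReal.ofReal_le_ofReal (h.2 ⟨hs, hFs⟩)

theorem ofReal_mul_chainFnE_sub_le (A B : ℝ) :
    ENNReal.ofReal A * (chainFnE f A - chainFnE f B) ≤
      ENNReal.ofReal B * ENNReal.ofReal (exp (-1)) := by
  rcases le_or_gt A 0 with hA | hA
  · simp [ENNReal.ofReal_of_nonpos hA]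
  rcases le_or_gt (chainFnE f A) (chainFnE f B) with hle | hlt
  · simp [tsub_eq_zero_of_le hle]
  have hB : 0 < B := by
    by_contra! hB
    exact hlt.not_ge (chainFnE_antitone f (hB.trans hA.le))
  rw [hf.chainFnE_eq_ofReal hA, hf.chainFnE_eq_ofReal hB] at hlt ⊢
  obtain ⟨⟨hs, hFs⟩, -⟩ := hf.isLeast_chainFn hB
  have hsS := (ENNReal.ofReal_lt_ofReal_iff_of_nonneg hs).1 hlt
  have hAS := hf.le_ccdf_chainFn hA (hs.trans_lt hsS)
  have hreal : A * (chainFn f A - chainFn f B) ≤ B * exp (-1) :=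
    calc A * (chainFn f A - chainFn f B)
        ≤ (chainFn f A - chainFn f B) * ccdf f (chainFn f B + (chainFn f A - chainFn f B)) := by
          rw [add_sub_cancel, mul_comm]
          exact mul_le_mul_of_nonneg_left hAS (sub_nonneg.2 hsS.le)
      _ ≤ exp (-1) * ccdf f (chainFn f B) := hf.mul_ccdf_add_le hs (sub_nonneg.2 hsS.le)
      _ ≤ B * exp (-1) := by rw [mul_comm]; gcongr
  rw [← ENNReal.ofReal_sub _ hs, ← ENNReal.ofReal_mul hA.le, ← ENNReal.ofReal_mul hB.le]
  exact ENNReal.ofReal_le_ofReal hreal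

end IsChainingDensity

section Covering

variable {X : Type*} [PseudoMetricSpace X] [Fintype X]

def ballFinset (x : X) (ρ : ℝ) : Finset X := Finset.univ.filter fun y => dist x y ≤ ρ

theorem disjoint_ballFinset_biUnion [DecidableEq X] {x : X} {r : ℝ} {T : Finset X}
    (hT : ∀ z ∈ T, ¬dist x z ≤ 2 * r) :
    Disjoint (ballFinset x r) (T.biUnion (ballFinset · r)) := by
  refine Finset.disjoint_left.2 fun y hy hy' => ?_
  obtain ⟨z, hz, hzy⟩ := Finset.mem_biUnion.1 hy'
  simp only [ballFinset, Finset.mem_filter, Finset.mem_univ, true_and] at hy hzy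
  exact hT z hz (by linarith [dist_triangle_right x z y])

theorem sum_mul_le_of_ball_bound [DecidableEq X] {ν μ g k : X → ℝ≥0∞} {c : ℝ≥0∞} {r : ℝ}
    (hr : 0 ≤ r) (h : ∀ x, (∑ y ∈ ballFinset x (2 * r), ν y) * (g x - k x) ≤
      (∑ y ∈ ballFinset x r, μ y) * c) (T : Finset X) :
    ∑ x ∈ T, ν x * g x ≤
      ∑ x ∈ T, ν x * k x + (∑ y ∈ T.biUnion (ballFinset · r), μ y) * c := by
  induction T using Finset.strongInduction with
  | H T ih =>
  rcases T.eq_empty_or_nonempty with rfl | hT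
  · simp
  obtain ⟨x₀, hx₀, hmax⟩ := T.exists_max_image (fun x => g x - k x) hT
  set C := T.filter fun x => dist x₀ x ≤ 2 * r
  set T' := T.filter fun x => ¬dist x₀ x ≤ 2 * r
  have hT' : T' ⊂ T := Finset.filter_ssubset.2 ⟨x₀, hx₀, by simpa using hr⟩
  have hC : ∑ x ∈ C, ν x * g x ≤
      ∑ x ∈ C, ν x * k x + (∑ y ∈ ballFinset x₀ r, μ y) * c :=
    calc ∑ x ∈ C, ν x * g x ≤ ∑ x ∈ C, (ν x * k x + ν x * (g x₀ - k x₀)) := by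
          refine Finset.sum_le_sum fun x hx => ?_
          rw [← mul_add]
          gcongr
          exact le_add_tsub.trans (add_le_add le_rfl (hmax x (Finset.mem_filter.1 hx).1))
      _ = ∑ x ∈ C, ν x * k x + (∑ x ∈ C, ν x) * (g x₀ - k x₀) := by
          rw [Finset.sum_add_distrib, Finset.sum_mul]
      _ ≤ ∑ x ∈ C, ν x * k x + (∑ y ∈ ballFinset x₀ (2 * r), ν y) * (g x₀ - k x₀) := by
          gcongr
          exact fun x hx => by simpa [ballFinset] using (Finset.mem_filter.1 hx).2
      _ ≤ _ := add_le_add le_rfl (h x₀)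
  have hmass : ∑ y ∈ ballFinset x₀ r, μ y + ∑ y ∈ T'.biUnion (ballFinset · r), μ y ≤
      ∑ y ∈ T.biUnion (ballFinset · r), μ y := by
    rw [← Finset.sum_union (disjoint_ballFinset_biUnion fun z hz => (Finset.mem_filter.1 hz).2)]
    refine Finset.sum_le_sum_of_subset (Finset.union_subset ?_ ?_)
    · exact Finset.subset_biUnion_of_mem (ballFinset · r) hx₀
    · exact Finset.biUnion_subset_biUnion_of_subset_left _ hT'.subset
  calc ∑ x ∈ T, ν x * g x = ∑ x ∈ C, ν x * g x + ∑ x ∈ T', ν x * g x :=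
        (Finset.sum_filter_add_sum_filter_not _ _ _).symm
    _ ≤ (∑ x ∈ C, ν x * k x + (∑ y ∈ ballFinset x₀ r, μ y) * c) +
        (∑ x ∈ T', ν x * k x + (∑ y ∈ T'.biUnion (ballFinset · r), μ y) * c) :=
        add_le_add hC (ih T' hT')
    _ = (∑ x ∈ C, ν x * k x + ∑ x ∈ T', ν x * k x) +
        (∑ y ∈ ballFinset x₀ r, μ y + ∑ y ∈ T'.biUnion (ballFinset · r), μ y) * c := by ring
    _ ≤ _ := by rw [Finset.sum_filter_add_sum_filter_not]; gcongr

end Covering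

theorem ofReal_ballMass {X : Type*} [MetricSpace X] [Fintype X] {μ : X → ℝ}
    (hμ : ∀ x, 0 ≤ μ x) (x : X) (ρ : ℝ) :
    ENNReal.ofReal (ballMass μ x ρ) = ∑ y ∈ ballFinset x ρ, ENNReal.ofReal (μ y) :=
  ENNReal.ofReal_sum_of_nonneg fun y _ => hμ y

/-- for probability measures `μ, ν` on a finite metric space `X` and
`r > 0`, `Σ_x ν(x)·h(ν(B(x,2r))) ≤ Σ_x ν(x)·h(μ(B(x,r))) + 1/e`
(with `0·∞ = 0` and `h(0) = lim_{p→0⁺} h(p)`). -/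
theorem stmt2 {X : Type*} [MetricSpace X] [Fintype X]
    (f : ℝ → ℝ) (hf : IsChainingDensity f)
    (μ ν : X → ℝ) (hμ : IsProbOn μ) (hν : IsProbOn ν) (r : ℝ) (hr : 0 < r) :
    (∑ x, ENNReal.ofReal (ν x) * chainFnE f (ballMass ν x (2 * r))) ≤
      (∑ x, ENNReal.ofReal (ν x) * chainFnE f (ballMass μ x r)) +
        ENNReal.ofReal (1 / Real.exp 1) := by
  classical
  have hball : ∀ x, (∑ y ∈ ballFinset x (2 * r), ENNReal.ofReal (ν y)) *
      (chainFnE f (ballMass ν x (2 * r)) - chainFnE f (ballMass μ x r)) ≤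
      (∑ y ∈ ballFinset x r, ENNReal.ofReal (μ y)) * ENNReal.ofReal (exp (-1)) := fun x => by
    rw [← ofReal_ballMass hν.1, ← ofReal_ballMass hμ.1]
    exact hf.ofReal_mul_chainFnE_sub_le _ _
  have htotal : ∑ y ∈ Finset.univ.biUnion (ballFinset · r), ENNReal.ofReal (μ y) ≤ 1 :=
    calc _ ≤ ∑ y, ENNReal.ofReal (μ y) := Finset.sum_le_sum_of_subset (Finset.subset_univ _)
      _ = 1 := by rw [← ENNReal.ofReal_sum_of_nonneg fun y _ => hμ.1 y, hμ.2, ENNReal.ofReal_one]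
  calc _ ≤ _ := sum_mul_le_of_ball_bound hr.le hball Finset.univ
    _ ≤ _ := by
      rw [one_div, ← exp_neg]
      gcongr
      exact (mul_le_mul_left htotal _).trans_eq (one_mul _)
end
end

section
/- Let (X,d) be a finite metric space with at least two points, h a chaining functional of log-concave type, and C a chaining tree for (X,d). Then there exists a probability measure μ on X with max_{x∈X} ∫₀^∞ h(μ(B(x,r))) dr ≤ 3·val_h(C); in particular, γ_h(X) ≤ 3·val_h(C). -/
open MeasureTheory

noncomputable section

open scoped ENNReal

/-- The sum of the edge labels of a rooted spanning tree described by a parent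
function (one edge per non-root vertex). -/
def edgeLabelSum {X : Type*} [Fintype X] (root : X) (prob : X → ℝ) : ℝ :=
  letI := Classical.decEq X
  ∑ x ∈ Finset.univ.erase root, prob x

/-- A chaining tree on the finite metric space `X`: a rooted spanning tree on `X`
(described by a parent function), together with probability labels
`p_e ∈ (0,1/2]` on the edges `e = {x, parent x}` (`x ≠ root`) summing to at most
`1/2`. -/
structure ChainingTree (X : Type*) [MetricSpace X] [Fintype X] where
  root : X
  parent : X → X
  prob : X → ℝ
  parent_root : parent root = root
  reaches_root : ∀ x : X, ∃ n : ℕ, parent^[n] x = root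
  prob_mem : ∀ x : X, x ≠ root → prob x ∈ Set.Ioc (0:ℝ) (1/2)
  prob_sum : edgeLabelSum root prob ≤ 1/2

/-- The length `l_e = d(u,v)·h(p_e)` of the parent edge at `x` (zero at the root). -/
def edgeLen {X : Type*} [MetricSpace X] [Fintype X] (f : ℝ → ℝ)
    (C : ChainingTree X) (x : X) : ℝ :=
  dist x (C.parent x) * chainFn f (C.prob x)

/-- The total length `Σ_{e ∈ P_x} l_e` of the path from `x` to the root (the path
reaches the root within `|X|` steps, and the root's term is `0`). -/
def pathLen {X : Type*} [MetricSpace X] [Fintype X] (f : ℝ → ℝ)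
    (C : ChainingTree X) (x : X) : ℝ :=
  ∑ n ∈ Finset.range (Fintype.card X), edgeLen f C (C.parent^[n] x)

/-- The value `val_h(C) = max_{x∈X} Σ_{e ∈ P_x} l_e` of a chaining tree. -/
def ctVal {X : Type*} [MetricSpace X] [Fintype X] (f : ℝ → ℝ)
    (C : ChainingTree X) : ℝ :=
  ⨆ x : X, pathLen f C x

/-- The majorizing measure functional
`γ_h(X) = inf_μ max_{x∈X} ∫₀^∞ h(μ(B(x,r))) dr`. -/
def gammaPrimal (X : Type*) [MetricSpace X] [Fintype X] (f : ℝ → ℝ) : ℝ≥0∞ :=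
  ⨅ μ : {m : X → ℝ // IsProbOn m}, ⨆ x : X, Hint f μ.1 x

/-!
Put the label `p_e` of each edge on its lower endpoint and the remaining mass, at least `1/2`,
on the root. Walking from `x` to the root, as soon as `r` exceeds the length of the path up to a
vertex `y`, the ball `B(x,r)` contains `y`, so `h(μ(B(x,r))) ≤ h(p_e)` for the edge `e` above `y`;
integrating along the path gives at most `Σ_{e ∈ P_x} d(e) h(p_e) ≤ val_h(C)`. Beyond the path
the ball contains the root, so the integrand is at most `h(1/2)` until `r = diam X`, after which
it vanishes; and `h(1/2) · diam X ≤ 2 val_h(C)` because `h(p_e) ≥ h(1/2)` on every edge, so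
`h(1/2) d(x, root) ≤ val_h(C)` for every `x`.
-/

open Set Filter Topology

lemma tendsto_ccdf_atTop {f : ℝ → ℝ} (hf : IntegrableOn f (Ioi 0)) :
    Tendsto (ccdf f) atTop (𝓝 0) := by
  have h := tendsto_setIntegral_of_antitone (μ := volume) (s := Ioi) (fun _ => measurableSet_Ioi)
    (fun _ _ hab => Ioi_subset_Ioi hab) ⟨0, hf⟩
  have hempty : ⋂ s : ℝ, Ioi s = ∅ := iInter_eq_empty_iff.mpr fun s => ⟨s, lt_irrefl s⟩
  rwa [hempty, setIntegral_empty] at h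

lemma integrableOn_of_integral_eq_one {f : ℝ → ℝ} (htotal : ∫ t in Ioi (0:ℝ), f t = 1) :
    IntegrableOn f (Ioi 0) :=
  Integrable.of_integral_ne_zero (htotal ▸ one_ne_zero)

lemma exists_ccdf_le {f : ℝ → ℝ} (hf : IntegrableOn f (Ioi 0)) {p : ℝ} (hp : 0 < p) :
    ∃ s, 0 ≤ s ∧ ccdf f s ≤ p :=
  ((eventually_ge_atTop 0).and ((tendsto_ccdf_atTop hf).eventually_le_const hp)).exists

lemma chainFn_nonneg (f : ℝ → ℝ) (p : ℝ) : 0 ≤ chainFn f p :=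
  Real.sInf_nonneg fun _ hs => hs.1

lemma chainFn_anti {f : ℝ → ℝ} (hf : IntegrableOn f (Ioi 0)) {p q : ℝ} (hp : 0 < p)
    (hpq : p ≤ q) : chainFn f q ≤ chainFn f p :=
  csInf_le_csInf ⟨0, fun _ hs => hs.1⟩ (exists_ccdf_le hf hp)
    fun _ hs => ⟨hs.1, hs.2.trans hpq⟩

lemma chainFnE_anti (f : ℝ → ℝ) {p q : ℝ} (hpq : p ≤ q) : chainFnE f q ≤ chainFnE f p :=
  sInf_le_sInf fun _ ⟨s, hs, hsp, ht⟩ => ⟨s, hs, hsp.trans hpq, ht⟩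

lemma chainFnE_eq_ofReal {f : ℝ → ℝ} (hf : IntegrableOn f (Ioi 0)) {p : ℝ} (hp : 0 < p) :
    chainFnE f p = ENNReal.ofReal (chainFn f p) := by
  have himage : {t : ℝ≥0∞ | ∃ s, 0 ≤ s ∧ ccdf f s ≤ p ∧ t = ENNReal.ofReal s}
      = ENNReal.ofReal '' {s | 0 ≤ s ∧ ccdf f s ≤ p} := by
    ext t
    constructor
    · rintro ⟨s, hs, hsp, rfl⟩; exact ⟨s, ⟨hs, hsp⟩, rfl⟩
    · rintro ⟨s, ⟨hs, hsp⟩, rfl⟩; exact ⟨s, hs, hsp, rfl⟩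
  rw [chainFnE, himage, chainFn]
  exact (ENNReal.ofReal_mono.map_csInf_of_continuousAt ENNReal.continuous_ofReal.continuousAt
    (exists_ccdf_le hf hp) ⟨0, fun _ hs => hs.1⟩).symm

lemma chainFnE_eq_zero_of_one_le {f : ℝ → ℝ} (htotal : ∫ t in Ioi (0:ℝ), f t = 1) {p : ℝ}
    (hp : 1 ≤ p) : chainFnE f p = 0 :=
  nonpos_iff_eq_zero.mp <| ENNReal.ofReal_zero ▸
    sInf_le ⟨0, le_rfl, by rwa [ccdf, htotal], rfl⟩

lemma lintegral_Ioc_le_sum_of_le {g : ℝ → ℝ≥0∞} {S : ℕ → ℝ} (hS : Monotone S) {c : ℕ → ℝ≥0∞}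
    (hg : ∀ k, ∀ r ∈ Ioc (S k) (S (k + 1)), g r ≤ c k) (n : ℕ) :
    ∫⁻ r in Ioc (S 0) (S n), g r ≤
      ∑ k ∈ Finset.range n, c k * ENNReal.ofReal (S (k + 1) - S k) := by
  induction n with
  | zero => simp
  | succ n ih =>
    rw [← Ioc_union_Ioc_eq_Ioc (hS n.zero_le) (hS n.le_succ),
      lintegral_union measurableSet_Ioc (Ioc_disjoint_Ioc_of_le le_rfl), Finset.sum_range_succ]
    gcongr
    calc ∫⁻ r in Ioc (S n) (S (n + 1)), g r ≤ ∫⁻ _ in Ioc (S n) (S (n + 1)), c n :=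
          setLIntegral_mono measurable_const (hg n)
      _ = c n * ENNReal.ofReal (S (n + 1) - S n) := by rw [setLIntegral_const, Real.volume_Ioc]

lemma setLIntegral_Ioi_le_of_le {g : ℝ → ℝ≥0∞} {a D : ℝ} {c : ℝ≥0∞} (ha : 0 ≤ a)
    (hc : ∀ r > a, g r ≤ c) (hD : ∀ r ≥ D, g r = 0) :
    ∫⁻ r in Ioi a, g r ≤ c * ENNReal.ofReal D := by
  calc ∫⁻ r in Ioi a, g r ≤ ∫⁻ r in Ioi a, (Iio D).indicator (fun _ => c) r := by
        refine setLIntegral_mono (measurable_const.indicator measurableSet_Iio) fun r hr => ?_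
        by_cases hrD : r < D
        · simpa [hrD] using hc r hr
        · simp [hrD, hD r (not_lt.mp hrD)]
    _ = c * volume (Iio D ∩ Ioi a) := by
        rw [lintegral_indicator_const measurableSet_Iio, Measure.restrict_apply measurableSet_Iio]
    _ ≤ c * volume (Ioo 0 D) := by
        gcongr
        exact fun r hr => ⟨ha.trans_lt hr.2, hr.1⟩
    _ = c * ENNReal.ofReal D := by rw [Real.volume_Ioo, sub_zero]

section BallMass

variable {X : Type*} [MetricSpace X] [Fintype X]

lemma le_ballMass {μ : X → ℝ} (hμ : ∀ y, 0 ≤ μ y) {x y : X} {r : ℝ} (h : dist x y ≤ r) :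
    μ y ≤ ballMass μ x r :=
  Finset.single_le_sum (fun z _ => hμ z) (Finset.mem_filter.mpr ⟨Finset.mem_univ y, h⟩)

lemma ballMass_eq_one {μ : X → ℝ} (hμ : IsProbOn μ) (x : X) {r : ℝ} (hr : fdiam X ≤ r) :
    ballMass μ x r = 1 := by
  rw [ballMass, Finset.filter_true_of_mem fun y _ => (Metric.dist_le_diam_of_mem
    Set.finite_univ.isBounded (mem_univ x) (mem_univ y)).trans hr, hμ.2]

end BallMass

lemma Function.iterate_eq_of_card_le {α : Type*} [Fintype α] {g : α → α} {a x : α}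
    (ha : g a = a) (hx : ∃ n, g^[n] x = a) {m : ℕ} (hm : Fintype.card α ≤ m) :
    g^[m] x = a := by
  classical
  suffices Nat.find hx < Fintype.card α by
    rw [← Nat.sub_add_cancel (this.le.trans hm), iterate_add_apply, Nat.find_spec hx,
      iterate_fixed ha]
  by_contra! hcard
  obtain ⟨i, j, hij, heq⟩ := Fintype.exists_ne_map_eq_of_card_lt
    (fun k : Fin (Nat.find hx + 1) => g^[k] x) (by simpa using Nat.lt_succ_of_le hcard)
  wlog hlt : i < j generalizing i j
  · exact this j i hij.symm heq.symm (lt_of_le_of_ne (not_lt.mp hlt) hij.symm)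
  -- the orbit would reach `a` already after `find - (j - i)` steps
  refine Nat.find_min hx (m := Nat.find hx - j + i) (by omega) ?_
  have hj : (j : ℕ) ≤ Nat.find hx := Nat.lt_succ_iff.mp j.2
  rw [iterate_add_apply, heq, ← iterate_add_apply, Nat.sub_add_cancel hj, Nat.find_spec hx]

namespace ChainingTree

variable {X : Type*} [MetricSpace X] [Fintype X] (C : ChainingTree X) (f : ℝ → ℝ)

open Classical in
def mass (y : X) : ℝ := if y = C.root then 1 - edgeLabelSum C.root C.prob else C.prob y

lemma mass_of_ne_root {y : X} (hy : y ≠ C.root) : C.mass y = C.prob y := if_neg hy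

lemma half_le_mass_root : 1 / 2 ≤ C.mass C.root := by
  rw [mass, if_pos rfl]
  linarith [C.prob_sum]

lemma mass_nonneg (y : X) : 0 ≤ C.mass y := by
  by_cases hy : y = C.root
  · subst hy; linarith [C.half_le_mass_root]
  · rw [C.mass_of_ne_root hy]; exact (C.prob_mem y hy).1.le

lemma isProbOn_mass : IsProbOn C.mass := by
  classical
  refine ⟨C.mass_nonneg, ?_⟩
  rw [← Finset.add_sum_erase _ _ (Finset.mem_univ C.root),
    Finset.sum_congr rfl fun y hy => C.mass_of_ne_root (Finset.ne_of_mem_erase hy), mass,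
    if_pos rfl, edgeLabelSum]
  convert sub_add_cancel (1 : ℝ) _

lemma iterate_card_eq_root (x : X) : C.parent^[Fintype.card X] x = C.root :=
  Function.iterate_eq_of_card_le C.parent_root (C.reaches_root x) le_rfl

def pathDist (x : X) (n : ℕ) : ℝ :=
  ∑ k ∈ Finset.range n, dist (C.parent^[k] x) (C.parent^[k + 1] x)

lemma pathDist_succ_sub (x : X) (n : ℕ) :
    C.pathDist x (n + 1) - C.pathDist x n = dist (C.parent^[n] x) (C.parent^[n + 1] x) :=
  Finset.sum_range_succ_sub_sum _

lemma pathDist_nonneg (x : X) (n : ℕ) : 0 ≤ C.pathDist x n :=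
  Finset.sum_nonneg fun _ _ => dist_nonneg

lemma pathDist_mono (x : X) : Monotone (C.pathDist x) :=
  monotone_nat_of_le_succ fun n => sub_nonneg.mp (C.pathDist_succ_sub x n ▸ dist_nonneg)

lemma dist_le_pathDist (x : X) (n : ℕ) : dist x (C.parent^[n] x) ≤ C.pathDist x n :=
  dist_le_range_sum_dist (fun k => C.parent^[k] x) n

lemma dist_root_le_pathDist (x : X) : dist x C.root ≤ C.pathDist x (Fintype.card X) :=
  C.iterate_card_eq_root x ▸ C.dist_le_pathDist x _

lemma edgeLen_nonneg (y : X) : 0 ≤ edgeLen f C y :=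
  mul_nonneg dist_nonneg (chainFn_nonneg f _)

lemma pathLen_le_ctVal (x : X) : pathLen f C x ≤ ctVal f C :=
  le_ciSup (Set.finite_range _).bddAbove x

lemma ctVal_nonneg : 0 ≤ ctVal f C :=
  (Finset.sum_nonneg fun _ _ => C.edgeLen_nonneg f _).trans (C.pathLen_le_ctVal f C.root)

variable {f}

lemma chainFn_half_mul_dist_parent_le (hf : IntegrableOn f (Ioi 0)) (y : X) :
    chainFn f (1 / 2) * dist y (C.parent y) ≤ edgeLen f C y := by
  by_cases hy : y = C.root
  · simp [edgeLen, hy, C.parent_root]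
  · obtain ⟨hp, hp2⟩ := C.prob_mem y hy
    rw [edgeLen, mul_comm]
    exact mul_le_mul_of_nonneg_left (chainFn_anti hf hp hp2) dist_nonneg

lemma chainFn_half_mul_dist_root_le (hf : IntegrableOn f (Ioi 0)) (x : X) :
    chainFn f (1 / 2) * dist x C.root ≤ pathLen f C x := by
  calc chainFn f (1 / 2) * dist x C.root
      ≤ chainFn f (1 / 2) * C.pathDist x (Fintype.card X) :=
        mul_le_mul_of_nonneg_left (C.dist_root_le_pathDist x) (chainFn_nonneg f _)
    _ ≤ pathLen f C x := by
        rw [pathDist, Finset.mul_sum, pathLen]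
        refine Finset.sum_le_sum fun k _ => ?_
        rw [Function.iterate_succ_apply']
        exact C.chainFn_half_mul_dist_parent_le hf _

lemma chainFn_half_mul_fdiam_le (hf : IntegrableOn f (Ioi 0)) :
    chainFn f (1 / 2) * fdiam X ≤ 2 * ctVal f C := by
  have hval := C.ctVal_nonneg f
  rcases (chainFn_nonneg f (1 / 2)).eq_or_lt with h0 | hpos
  · rw [← h0, zero_mul]; linarith
  rw [← le_div_iff₀' hpos]
  refine Metric.diam_le_of_forall_dist_le (by positivity) fun u _ v _ => ?_
  rw [le_div_iff₀' hpos]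
  calc chainFn f (1 / 2) * dist u v
      ≤ chainFn f (1 / 2) * dist u C.root + chainFn f (1 / 2) * dist v C.root := by
        rw [← mul_add]; exact mul_le_mul_of_nonneg_left (dist_triangle_right u v _) hpos.le
    _ ≤ 2 * ctVal f C := by
        linarith [C.chainFn_half_mul_dist_root_le hf u, C.chainFn_half_mul_dist_root_le hf v,
          C.pathLen_le_ctVal f u, C.pathLen_le_ctVal f v]

lemma lintegral_Ioc_pathDist_le (hf : IntegrableOn f (Ioi 0)) (x : X) :
    ∫⁻ r in Ioc 0 (C.pathDist x (Fintype.card X)), chainFnE f (ballMass C.mass x r) ≤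
      ENNReal.ofReal (pathLen f C x) := by
  have hbound : ∀ k, ∀ r ∈ Ioc (C.pathDist x k) (C.pathDist x (k + 1)),
      chainFnE f (ballMass C.mass x r) ≤ ENNReal.ofReal (chainFn f (C.prob (C.parent^[k] x))) := by
    intro k r hr
    -- a nonempty interval comes from an edge of positive length, hence not from the root
    have hne : C.parent^[k] x ≠ C.root := by
      intro h
      have hstep := C.pathDist_succ_sub x k
      rw [Function.iterate_succ_apply', h, C.parent_root, dist_self] at hstep
      linarith [hr.1, hr.2]
    rw [← chainFnE_eq_ofReal hf (C.prob_mem _ hne).1, ← C.mass_of_ne_root hne]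
    exact chainFnE_anti f (le_ballMass C.mass_nonneg ((C.dist_le_pathDist x k).trans hr.1.le))
  have hsum := lintegral_Ioc_le_sum_of_le (C.pathDist_mono x) hbound (Fintype.card X)
  rw [show C.pathDist x 0 = 0 from Finset.sum_range_zero _] at hsum
  refine hsum.trans_eq ?_
  rw [pathLen, ENNReal.ofReal_sum_of_nonneg fun k _ => C.edgeLen_nonneg f _]
  refine Finset.sum_congr rfl fun k _ => ?_
  rw [C.pathDist_succ_sub, ← ENNReal.ofReal_mul (chainFn_nonneg f _), edgeLen, mul_comm,
    Function.iterate_succ_apply']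

lemma setLIntegral_Ioi_pathDist_le (htotal : ∫ t in Ioi (0:ℝ), f t = 1) (x : X) :
    ∫⁻ r in Ioi (C.pathDist x (Fintype.card X)), chainFnE f (ballMass C.mass x r) ≤
      ENNReal.ofReal (2 * ctVal f C) := by
  have hf := integrableOn_of_integral_eq_one htotal
  calc _ ≤ ENNReal.ofReal (chainFn f (1 / 2)) * ENNReal.ofReal (fdiam X) := by
        refine setLIntegral_Ioi_le_of_le (C.pathDist_nonneg x _) (fun r hr => ?_) fun r hr => ?_
        · rw [← chainFnE_eq_ofReal hf one_half_pos]
          exact chainFnE_anti f (C.half_le_mass_root.trans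
            (le_ballMass C.mass_nonneg ((C.dist_root_le_pathDist x).trans hr.le)))
        · rw [ballMass_eq_one C.isProbOn_mass x hr, chainFnE_eq_zero_of_one_le htotal le_rfl]
    _ = ENNReal.ofReal (chainFn f (1 / 2) * fdiam X) :=
        (ENNReal.ofReal_mul (chainFn_nonneg f _)).symm
    _ ≤ ENNReal.ofReal (2 * ctVal f C) :=
        ENNReal.ofReal_le_ofReal (C.chainFn_half_mul_fdiam_le hf)

lemma hint_mass_le (htotal : ∫ t in Ioi (0:ℝ), f t = 1) (x : X) :
    Hint f C.mass x ≤ ENNReal.ofReal (3 * ctVal f C) := by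
  have hval := C.ctVal_nonneg f
  rw [Hint, ← Ioc_union_Ioi_eq_Ioi (C.pathDist_nonneg x _),
    lintegral_union measurableSet_Ioi (Ioc_disjoint_Ioi le_rfl)]
  calc _ ≤ ENNReal.ofReal (ctVal f C) + ENNReal.ofReal (2 * ctVal f C) :=
        add_le_add ((C.lintegral_Ioc_pathDist_le (integrableOn_of_integral_eq_one htotal) x).trans
          (ENNReal.ofReal_le_ofReal (C.pathLen_le_ctVal f x)))
          (C.setLIntegral_Ioi_pathDist_le htotal x)
    _ = ENNReal.ofReal (3 * ctVal f C) := by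
        rw [← ENNReal.ofReal_add hval (by positivity)]
        ring_nf

end ChainingTree

theorem stmt9_general {X : Type} [MetricSpace X] [Fintype X]
    (f : ℝ → ℝ) (hf : IsChainingDensity f) (C : ChainingTree X) :
    (∃ μ : X → ℝ, IsProbOn μ ∧
      (⨆ x : X, Hint f μ x) ≤ ENNReal.ofReal (3 * ctVal f C)) ∧
    gammaPrimal X f ≤ ENNReal.ofReal (3 * ctVal f C) := by
  have hbound : ⨆ x, Hint f C.mass x ≤ ENNReal.ofReal (3 * ctVal f C) :=
    iSup_le (C.hint_mass_le hf.total)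
  exact ⟨⟨C.mass, C.isProbOn_mass, hbound⟩, iInf_le_of_le ⟨C.mass, C.isProbOn_mass⟩ hbound⟩

/-- given a chaining tree `C` for a finite metric space `X` with at
least two points, there is a probability measure `μ` on `X` with
`max_{x∈X} ∫₀^∞ h(μ(B(x,r))) dr ≤ 3·val_h(C)`; in particular
`γ_h(X) ≤ 3·val_h(C)`. -/
theorem stmt9 {X : Type} [MetricSpace X] [Fintype X] [Nontrivial X]
    (f : ℝ → ℝ) (hf : IsChainingDensity f) (C : ChainingTree X) :
    (∃ μ : X → ℝ, IsProbOn μ ∧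
      (⨆ x : X, Hint f μ x) ≤ ENNReal.ofReal (3 * ctVal f C)) ∧
    gammaPrimal X f ≤ ENNReal.ofReal (3 * ctVal f C) :=
  stmt9_general f hf C
end
end
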